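/- Let $E_1, G_1, \ldots, E_m, G_m$ be finite sets of nonzero reals with $E_k \cap G_k = \varnothing$ for each $k$, and suppose the sets $A_k = E_k \cup G_k$ satisfy $\max A_{k+1} \le \frac14 d(A_k)$ for $1 \le k < m$ (where $d$ is the minimal-gap function, with $d(\{x\}) = |x|$). Define $F_k = \sum_{i \ne k} G_i + E_k$ (the sumset of $E_k$ with all $G_i$, $i \ne k$). Then the sets $F_1, \ldots, F_m$ are pairwise disjoint. -/

import Mathlib

/-- Minimal gap of a finite set: min distance between distinct points if `2 ≤ card`,
and `|x|` for a singleton `{x}`. -/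
noncomputable def dGap (A : Finset ℝ) : ℝ :=
  if 2 ≤ A.card then sInf {r : ℝ | ∃ x ∈ A, ∃ y ∈ A, x ≠ y ∧ r = |x - y|}
  else sInf {r : ℝ | ∃ x ∈ A, r = |x|}

/-- `max A = max_{a ∈ A} |a|`. -/
noncomputable def maxAbs (A : Finset ℝ) : ℝ := sSup {r : ℝ | ∃ x ∈ A, r = |x|}

/-!
If `∑ g i = ∑ h i` with `g i, h i ∈ A i`, `g k ∈ E k` and `h k ∈ G k`, then `g ≠ h`. Put
`M i = max A i`; since `d(A) ≤ 2 max A`, the hypothesis gives `M (i+1) ≤ M i / 2`. The differences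
`x i = g i - h i` satisfy `|x i| ≤ 2 M i`, and a nonzero `x i` has `|x i| ≥ d(A i) ≥ 4 M (i+1)`,
more than any tail `|∑_{j>i} x j| < 4 M (i+1)` can cancel. Hence `∑ x ≠ 0`.
-/

open Finset

lemma abs_le_maxAbs {A : Finset ℝ} {x : ℝ} (hx : x ∈ A) : |x| ≤ maxAbs A :=
  le_csSup ((A.finite_toSet.image abs).bddAbove.mono (by rintro r ⟨y, hy, rfl⟩; exact ⟨y, hy, rfl⟩))
    ⟨x, hx, rfl⟩

lemma dGap_le_abs_sub {A : Finset ℝ} {x y : ℝ} (hx : x ∈ A) (hy : y ∈ A) (hxy : x ≠ y) :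
    dGap A ≤ |x - y| := by
  rw [dGap, if_pos (show 2 ≤ A.card from one_lt_card.mpr ⟨x, hx, y, hy, hxy⟩)]
  exact csInf_le ⟨0, by rintro r ⟨a, -, b, -, -, rfl⟩; exact abs_nonneg _⟩ ⟨x, hx, y, hy, hxy, rfl⟩

lemma dGap_le_two_mul_maxAbs {A : Finset ℝ} (hA : A.Nonempty) : dGap A ≤ 2 * maxAbs A := by
  by_cases hcard : 2 ≤ A.card
  · obtain ⟨x, hx, y, hy, hxy⟩ := one_lt_card.mp hcard
    calc dGap A ≤ |x - y| := dGap_le_abs_sub hx hy hxy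
      _ ≤ |x| + |y| := abs_sub _ _
      _ ≤ 2 * maxAbs A := by linarith [abs_le_maxAbs hx, abs_le_maxAbs hy]
  · obtain ⟨x, hx⟩ := hA
    have hinf : sInf {r : ℝ | ∃ x ∈ A, r = |x|} ≤ |x| :=
      csInf_le ⟨0, by rintro r ⟨a, -, rfl⟩; exact abs_nonneg _⟩ ⟨x, hx, rfl⟩
    rw [dGap, if_neg hcard]
    linarith [abs_le_maxAbs hx, abs_nonneg x]

/-- The induction carries the tail bound `|∑ x| < 4 M 0` along with the conclusion `∑ x ≠ 0`. -/
lemma abs_sum_pos_and_lt_of_lacunary {n : ℕ} (x M : Fin (n + 1) → ℝ)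
    (hxM : ∀ i, |x i| ≤ 2 * M i) (hM : ∀ i : Fin n, M i.succ ≤ M i.castSucc / 2)
    (hgap : ∀ i : Fin n, x i.castSucc ≠ 0 → 4 * M i.succ ≤ |x i.castSucc|) (hx : x ≠ 0) :
    0 < |∑ i, x i| ∧ |∑ i, x i| < 4 * M 0 := by
  induction n with
  | zero =>
    have hx0 : x 0 ≠ 0 := fun h0 => hx (funext fun i => by rwa [Fin.fin_one_eq_zero i])
    rw [Fin.sum_univ_one]
    exact ⟨abs_pos.mpr hx0, by linarith [hxM 0, abs_pos.mpr hx0]⟩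
  | succ n ih =>
    rw [Fin.sum_univ_succ]
    by_cases htail : (fun i : Fin (n + 1) => x i.succ) = 0
    · have hx0 : x 0 ≠ 0 := fun h0 => hx (funext (Fin.cases h0 (congrFun htail)))
      rw [sum_eq_zero fun i _ => congrFun htail i, add_zero]
      exact ⟨abs_pos.mpr hx0, by linarith [hxM 0, abs_pos.mpr hx0]⟩
    · obtain ⟨hpos, hlt⟩ := ih (fun i : Fin (n + 1) => x i.succ) (fun i : Fin (n + 1) => M i.succ)
        (fun i => hxM i.succ) (fun i => hM i.succ) (fun i => hgap i.succ) htail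
      have hM0 := hM 0
      have hgap0 := hgap 0
      simp only [Fin.succ_zero_eq_one, Fin.castSucc_zero] at hlt hM0 hgap0
      by_cases hx0 : x 0 = 0
      · rw [hx0, zero_add]
        exact ⟨hpos, by linarith⟩
      · constructor
        · linarith [hgap0 hx0, abs_sub_abs_le_abs_add (x 0) (∑ i : Fin (n + 1), x i.succ)]
        · linarith [abs_add_le (x 0) (∑ i : Fin (n + 1), x i.succ), hxM 0]

lemma mem_union_of_forall_ne {ι α : Type*} [DecidableEq α] {E G : ι → Finset α} {g : ι → α}
    {k : ι} (hG : ∀ i, i ≠ k → g i ∈ G i) (hE : g k ∈ E k) (i : ι) : g i ∈ E i ∪ G i := by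
  rcases eq_or_ne i k with rfl | hi
  · exact mem_union_left _ hE
  · exact mem_union_right _ (hG i hi)

theorem stmt14_general (m : ℕ) (E G : Fin m → Finset ℝ)
    (hdisj : ∀ k, Disjoint (E k) (G k))
    (hmax : ∀ k : Fin m, ∀ h : (k : ℕ) + 1 < m,
      maxAbs (E ⟨(k : ℕ) + 1, h⟩ ∪ G ⟨(k : ℕ) + 1, h⟩) ≤ dGap (E k ∪ G k) / 4) :
    (Set.univ : Set (Fin m)).Pairwise fun k j => Disjoint
      {z : ℝ | ∃ g : Fin m → ℝ, (∀ i, i ≠ k → g i ∈ G i) ∧ g k ∈ E k ∧ z = ∑ i, g i}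
      {z : ℝ | ∃ g : Fin m → ℝ, (∀ i, i ≠ j → g i ∈ G i) ∧ g j ∈ E j ∧ z = ∑ i, g i} := by
  intro k _ j _ hkj
  rw [Set.disjoint_left]
  rintro z ⟨g, hg, hgk, rfl⟩ ⟨h, hh, hhj, hz⟩
  obtain ⟨n, rfl⟩ := Nat.exists_eq_add_one_of_ne_zero k.pos.ne'
  have hgA := mem_union_of_forall_ne hg hgk
  have hhA := mem_union_of_forall_ne hh hhj
  have hne : g - h ≠ 0 := fun e =>
    disjoint_left.mp (hdisj k) hgk (sub_eq_zero.mp (congrFun e k) ▸ hh k hkj)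
  have hdecay (i : Fin n) :
      4 * maxAbs (E i.succ ∪ G i.succ) ≤ dGap (E i.castSucc ∪ G i.castSucc) := by
    have := hmax i.castSucc (by simp)
    change maxAbs (E i.succ ∪ G i.succ) ≤ _ at this
    linarith
  have hbound (i) : |(g - h) i| ≤ 2 * maxAbs (E i ∪ G i) :=
    (abs_sub _ _).trans (by linarith [abs_le_maxAbs (hgA i), abs_le_maxAbs (hhA i)])
  have hhalf (i : Fin n) :
      maxAbs (E i.succ ∪ G i.succ) ≤ maxAbs (E i.castSucc ∪ G i.castSucc) / 2 := by
    linarith [hdecay i, dGap_le_two_mul_maxAbs ⟨_, hgA i.castSucc⟩]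
  have hgap (i : Fin n) (hi : (g - h) i.castSucc ≠ 0) :
      4 * maxAbs (E i.succ ∪ G i.succ) ≤ |(g - h) i.castSucc| :=
    (hdecay i).trans (dGap_le_abs_sub (hgA _) (hhA _) (sub_ne_zero.mp hi))
  refine (abs_sum_pos_and_lt_of_lacunary _ _ hbound hhalf hgap hne).1.ne' ?_
  simp [sum_sub_distrib, hz]

theorem stmt14 (m : ℕ) (E G : Fin m → Finset ℝ)
    (hE0 : ∀ k, ∀ a ∈ E k, a ≠ 0) (hG0 : ∀ k, ∀ a ∈ G k, a ≠ 0)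
    (hdisj : ∀ k, Disjoint (E k) (G k))
    (hmax : ∀ k : Fin m, ∀ h : (k : ℕ) + 1 < m,
      maxAbs (E ⟨(k : ℕ) + 1, h⟩ ∪ G ⟨(k : ℕ) + 1, h⟩) ≤ dGap (E k ∪ G k) / 4) :
    (Set.univ : Set (Fin m)).Pairwise fun k j => Disjoint
      {z : ℝ | ∃ g : Fin m → ℝ, (∀ i, i ≠ k → g i ∈ G i) ∧ g k ∈ E k ∧ z = ∑ i, g i}
      {z : ℝ | ∃ g : Fin m → ℝ, (∀ i, i ≠ j → g i ∈ G i) ∧ g j ∈ E j ∧ z = ∑ i, g i} :=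
  stmt14_general m E G hdisj hmax
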